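/- arXiv:1511.07961 — 4 statements merged into one kernel-verified Lean document; each statement's English description precedes it below -/
import Mathlib

section
/- Let V be an m×n real matrix, W an m×k real matrix, and H a k×n real matrix, all with nonnegative entries, and let λ0 > 0. Suppose W′ is obtained from W by the multiplicative update w′_{ij} = w_{ij} · (VHᵀ)_{ij} / ((WHHᵀ)_{ij} + λ0 w_{ij}), where each denominator (WHHᵀ)_{ij} + λ0 w_{ij} is positive. Then ‖V − W′H‖_F² + λ0‖W′‖_F² ≤ ‖V − WH‖_F² + λ0‖W‖_F². -/
/-!
Row by row, the objective is a constant plus `q(w) = wᵀAw − 2bᵀw` with `A = HHᵀ + λ0 I` and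
`b` the row of `VHᵀ`, and the update sends the old row `u` to `u ⊙ b / (Au)`. As `A` is
symmetric with nonnegative off-diagonal entries, AM–GM on each off-diagonal term gives the
Lee–Seung majorant `(u ⊙ r)ᵀA(u ⊙ r) ≤ ∑ⱼ uⱼ rⱼ² (Au)ⱼ`. At `r = b / (Au)` this bounds
`q(u) − q(u ⊙ r)` below by `∑ⱼ uⱼ ((Au)ⱼ − bⱼ)² / (Au)ⱼ ≥ 0`.
-/

open Matrix BigOperators

noncomputable def frobSq {m n : ℕ} (A : Matrix (Fin m) (Fin n) ℝ) : ℝ :=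
  ∑ i, ∑ j, (A i j) ^ 2

section Majorization

variable {ι : Type*} [Fintype ι] {A : Matrix ι ι ℝ}

theorem dotProduct_vecMul_mul_le (hA : A.IsSymm) (hoff : ∀ j l, j ≠ l → 0 ≤ A j l)
    {u : ι → ℝ} (hu : 0 ≤ u) (r : ι → ℝ) :
    (u * r) ⬝ᵥ ((u * r) ᵥ* A) ≤ ∑ j, u j * r j ^ 2 * (u ᵥ* A) j := by
  set c : ι → ι → ℝ := fun j l => A j l * u j * u l
  have hc : ∀ j l, c l j = c j l := fun j l => by simp only [c, hA.apply]; ring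
  have hterm : ∀ j l, c j l * (r j * r l) ≤ c j l * ((r j ^ 2 + r l ^ 2) / 2) := by
    intro j l
    rcases eq_or_ne j l with rfl | hjl
    · exact le_of_eq (by ring)
    · exact mul_le_mul_of_nonneg_left (by nlinarith [sq_nonneg (r j - r l)])
        (mul_nonneg (mul_nonneg (hoff j l hjl) (hu j)) (hu l))
  have hswap : ∑ j, ∑ l, c j l * r l ^ 2 = ∑ j, ∑ l, c j l * r j ^ 2 := by
    rw [Finset.sum_comm]
    simp only [hc]
  calc (u * r) ⬝ᵥ ((u * r) ᵥ* A) = ∑ j, ∑ l, c j l * (r j * r l) := by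
        simp only [c, dotProduct, vecMul, Finset.mul_sum, Pi.mul_apply]
        refine Finset.sum_congr rfl fun j _ => Finset.sum_congr rfl fun l _ => ?_
        rw [hA.apply]; ring
    _ ≤ ∑ j, ∑ l, c j l * ((r j ^ 2 + r l ^ 2) / 2) :=
        Finset.sum_le_sum fun j _ => Finset.sum_le_sum fun l _ => hterm j l
    _ = (∑ j, ∑ l, c j l * r j ^ 2 + ∑ j, ∑ l, c j l * r l ^ 2) / 2 := by
        simp only [mul_add, add_div, Finset.sum_add_distrib, Finset.sum_div, mul_div_assoc]
    _ = ∑ j, u j * r j ^ 2 * (u ᵥ* A) j := by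
        rw [hswap, add_self_div_two]
        simp only [c, vecMul, dotProduct, Finset.mul_sum]
        refine Finset.sum_congr rfl fun j _ => Finset.sum_congr rfl fun l _ => ?_
        rw [hA.apply]; ring

def quadObjective (A : Matrix ι ι ℝ) (b w : ι → ℝ) : ℝ :=
  w ⬝ᵥ (w ᵥ* A) - 2 * (w ⬝ᵥ b)

theorem quadObjective_mul_div_vecMul_le (hA : A.IsSymm) (hoff : ∀ j l, j ≠ l → 0 ≤ A j l)
    {u : ι → ℝ} (hu : 0 ≤ u) (hd : ∀ j, 0 < (u ᵥ* A) j) (b : ι → ℝ) :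
    quadObjective A b (u * (b / (u ᵥ* A))) ≤ quadObjective A b u := by
  set d := u ᵥ* A
  have hcoord : ∀ j, u j * (b j / d j) ^ 2 * d j - 2 * (u j * (b j / d j) * b j)
      ≤ u j * d j - 2 * (u j * b j) := by
    intro j
    have hgap : u j * d j - 2 * (u j * b j)
        - (u j * (b j / d j) ^ 2 * d j - 2 * (u j * (b j / d j) * b j))
        = u j * (d j - b j) ^ 2 / d j := by
      field_simp [(hd j).ne']
      ring
    linarith [div_nonneg (mul_nonneg (hu j) (sq_nonneg (d j - b j))) (hd j).le]
  calc quadObjective A b (u * (b / d))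
      ≤ ∑ j, u j * (b j / d j) ^ 2 * d j - 2 * ∑ j, u j * (b j / d j) * b j := by
        unfold quadObjective
        gcongr
        · exact dotProduct_vecMul_mul_le hA hoff hu _
        · simp [dotProduct]
    _ ≤ ∑ j, u j * d j - 2 * ∑ j, u j * b j := by
        simp only [Finset.mul_sum, ← Finset.sum_sub_distrib]
        exact Finset.sum_le_sum fun j _ => hcoord j
    _ = quadObjective A b u := by simp [quadObjective, dotProduct, d]

end Majorization

theorem dotProduct_sub_vecMul_add_mul_dotProduct {ι κ : Type*} [Fintype ι] [Fintype κ]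
    [DecidableEq ι] (H : Matrix ι κ ℝ) (lam : ℝ) (v : κ → ℝ) (w : ι → ℝ) :
    (v - w ᵥ* H) ⬝ᵥ (v - w ᵥ* H) + lam * (w ⬝ᵥ w)
      = v ⬝ᵥ v + quadObjective (H * Hᵀ + lam • 1) (v ᵥ* Hᵀ) w := by
  have hcross : w ᵥ* H ⬝ᵥ v = w ⬝ᵥ v ᵥ* Hᵀ := by
    rw [vecMul_transpose, dotProduct_mulVec]
  have hgram : w ⬝ᵥ w ᵥ* (H * Hᵀ) = w ᵥ* H ⬝ᵥ w ᵥ* H := by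
    rw [← vecMul_vecMul, vecMul_transpose, dotProduct_mulVec]
  simp only [quadObjective, vecMul_add, vecMul_smul, vecMul_one, dotProduct_add, dotProduct_smul,
    sub_dotProduct, dotProduct_sub, hgram, smul_eq_mul]
  rw [dotProduct_comm v (w ᵥ* H), hcross]
  ring

theorem frobSq_eq_sum_dotProduct {m n : ℕ} (M : Matrix (Fin m) (Fin n) ℝ) :
    frobSq M = ∑ i, M i ⬝ᵥ M i := by
  simp [frobSq, dotProduct, sq]

theorem frobSq_sub_mul_add_mul_frobSq {m n k : ℕ} (V : Matrix (Fin m) (Fin n) ℝ)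
    (H : Matrix (Fin k) (Fin n) ℝ) (lam : ℝ) (M : Matrix (Fin m) (Fin k) ℝ) :
    frobSq (V - M * H) + lam * frobSq M
      = frobSq V + ∑ i, quadObjective (H * Hᵀ + lam • 1) ((V * Hᵀ) i) (M i) := by
  simp only [frobSq_eq_sum_dotProduct, Finset.mul_sum, ← Finset.sum_add_distrib]
  exact Finset.sum_congr rfl fun i _ =>
    dotProduct_sub_vecMul_add_mul_dotProduct H lam (V i) (M i)

theorem mul_transpose_add_smul_one_isSymm {ι κ : Type*} [Fintype κ] [DecidableEq ι]
    (H : Matrix ι κ ℝ) (lam : ℝ) : (H * Hᵀ + lam • 1).IsSymm := by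
  simp only [IsSymm, transpose_add, transpose_mul, transpose_transpose, transpose_smul,
    transpose_one]

theorem mul_transpose_add_smul_one_apply_nonneg_of_ne {ι κ : Type*} [Fintype κ] [DecidableEq ι]
    {H : Matrix ι κ ℝ} (hH : ∀ i j, 0 ≤ H i j) (lam : ℝ) {j l : ι} (hjl : j ≠ l) :
    0 ≤ (H * Hᵀ + lam • (1 : Matrix ι ι ℝ)) j l := by
  have hgram : 0 ≤ (H * Hᵀ) j l := by
    rw [mul_apply]
    exact Finset.sum_nonneg fun t _ => mul_nonneg (hH j t) (hH l t)
  simpa [one_apply_ne hjl] using hgram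

theorem w_update_nonincreasing_general
    {m n k : ℕ}
    (V : Matrix (Fin m) (Fin n) ℝ) (W : Matrix (Fin m) (Fin k) ℝ)
    (H : Matrix (Fin k) (Fin n) ℝ)
    (hW : ∀ i j, 0 ≤ W i j) (hH : ∀ i j, 0 ≤ H i j)
    (lam0 : ℝ)
    (W' : Matrix (Fin m) (Fin k) ℝ)
    (hWden : ∀ i j, 0 < (W * H * Hᵀ) i j + lam0 * W i j)
    (hW' : ∀ i j, W' i j =
      W i j * (V * Hᵀ) i j / ((W * H * Hᵀ) i j + lam0 * W i j)) :
    frobSq (V - W' * H) + lam0 * frobSq W' ≤ frobSq (V - W * H) + lam0 * frobSq W := by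
  set A := H * Hᵀ + lam0 • (1 : Matrix (Fin k) (Fin k) ℝ)
  have hden : ∀ i j, (W i ᵥ* A) j = (W * H * Hᵀ) i j + lam0 * W i j := fun i j => by
    simp [A, vecMul_add, vecMul_smul, mul_apply_eq_vecMul]
  have hrow : ∀ i, W' i = W i * ((V * Hᵀ) i / (W i ᵥ* A)) := fun i => by
    ext j
    simp only [hW', hden, Pi.mul_apply, Pi.div_apply, mul_div_assoc]
  rw [frobSq_sub_mul_add_mul_frobSq, frobSq_sub_mul_add_mul_frobSq]
  gcongr with i
  rw [hrow]
  exact quadObjective_mul_div_vecMul_le (mul_transpose_add_smul_one_isSymm H lam0)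
    (fun _ _ => mul_transpose_add_smul_one_apply_nonneg_of_ne hH lam0) (fun j => hW i j)
    (fun j => (hden i j).symm ▸ hWden i j) _

/-- The regularised objective `‖V − WH‖_F² + λ0‖W‖_F²` is non-increasing under
the multiplicative `W`-update. -/
theorem w_update_nonincreasing
    {m n k : ℕ}
    (V : Matrix (Fin m) (Fin n) ℝ) (W : Matrix (Fin m) (Fin k) ℝ)
    (H : Matrix (Fin k) (Fin n) ℝ)
    (hV : ∀ i j, 0 ≤ V i j) (hW : ∀ i j, 0 ≤ W i j) (hH : ∀ i j, 0 ≤ H i j)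
    (lam0 : ℝ) (hlam0 : 0 < lam0)
    (W' : Matrix (Fin m) (Fin k) ℝ)
    (hWden : ∀ i j, 0 < (W * H * Hᵀ) i j + lam0 * W i j)
    (hW' : ∀ i j, W' i j =
      W i j * (V * Hᵀ) i j / ((W * H * Hᵀ) i j + lam0 * W i j)) :
    frobSq (V - W' * H) + lam0 * frobSq W' ≤ frobSq (V - W * H) + lam0 * frobSq W :=
  w_update_nonincreasing_general V W H hW hH lam0 W' hWden hW'
end

section
/- Let V ∈ ℝ^{m×n}, W ∈ ℝ^{m×k}, H, H_ideal ∈ ℝ^{k×n} be real matrices with W and H entrywise nonnegative, let λ1, λ2 ≥ 0, fix indices i, j with h^t = H_{ij} > 0, and let F_{ij} : ℝ → ℝ be the NMF-Guttman objective f(W,H) viewed as a function of the single entry H_{ij}. Set φ_{ij} = ((WᵀWH)_{ij} + λ1 h^t + 6λ2 (h^t)³ + λ2 h^t)/h^t and define G(h, h^t) = F_{ij}(h^t) + F_{ij}′(h^t)(h − h^t) + φ_{ij}(h − h^t)². Then G(h, h^t) ≥ F_{ij}(h^t) + F_{ij}′(h^t)(h − h^t) + (1/2)F_{ij}″(h^t)(h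 − h^t)² for all h ∈ ℝ, i.e. G dominates the second-order Taylor polynomial of F_{ij} at h^t, and G(h^t, h^t) = F_{ij}(h^t). -/
open Matrix BigOperators

/-- The NMF-Guttman objective. -/
noncomputable def fObj {m n k : ℕ} (V : Matrix (Fin m) (Fin n) ℝ)
    (Hideal : Matrix (Fin k) (Fin n) ℝ) (lam0 lam1 lam2 : ℝ)
    (W : Matrix (Fin m) (Fin k) ℝ) (H : Matrix (Fin k) (Fin n) ℝ) : ℝ :=
  frobSq (V - W * H) + lam0 * frobSq W + lam1 * frobSq (H - Hideal)
    + lam2 * frobSq (H ⊙ H - H)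

/-- The matrix obtained from `A` by replacing its `(i,j)` entry with `x`. -/
def updEntry {k n : ℕ} (A : Matrix (Fin k) (Fin n) ℝ) (i : Fin k) (j : Fin n)
    (x : ℝ) : Matrix (Fin k) (Fin n) ℝ :=
  fun a b => if a = i ∧ b = j then x else A a b

/-!
As a function of the single entry `h = H i j`, the objective is a quartic: the data term and the
`λ1` term are quadratics with leading coefficients `(WᵀW)ᵢᵢ` and `λ1`, and the `λ2` term is
`λ2 (h² - h)²` plus a constant. Hence `½ F″(h) = (WᵀW)ᵢᵢ + λ1 + λ2 (6h² - 6h + 1)`, and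
`φ - ½ F″(hᵗ) = ((WᵀWH)ᵢⱼ - (WᵀW)ᵢᵢ hᵗ) / hᵗ + 6 λ2 hᵗ`, which is nonnegative because
`(WᵀWH)ᵢⱼ ≥ (WᵀW)ᵢᵢ Hᵢⱼ` for entrywise nonnegative `W` and `H`.
-/

theorem frobSq_sub_sq_eq_of_eq_off {m n : ℕ} {A B : Matrix (Fin m) (Fin n) ℝ}
    (i : Fin m) (j : Fin n) (hAB : ∀ a b, ¬(a = i ∧ b = j) → A a b = B a b) :
    frobSq A - A i j ^ 2 = frobSq B - B i j ^ 2 := by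
  suffices frobSq A - frobSq B = A i j ^ 2 - B i j ^ 2 by linarith
  simp only [frobSq, ← Finset.sum_sub_distrib, ← Finset.sum_product']
  rw [Finset.sum_eq_single (i, j) (fun p _ hp => by
    rw [hAB p.1 p.2 (fun h => hp (Prod.ext h.1 h.2)), sub_self]) (by simp)]

section updEntry

variable {k n : ℕ} (A : Matrix (Fin k) (Fin n) ℝ) (i : Fin k) (j : Fin n) (x : ℝ)

@[simp]
theorem updEntry_apply_self : updEntry A i j x i j = x := by
  simp [updEntry]

theorem updEntry_apply_of_ne {a : Fin k} {b : Fin n} (hab : ¬(a = i ∧ b = j)) :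
    updEntry A i j x a b = A a b :=
  if_neg hab

theorem mul_updEntry_apply {m : ℕ} (W : Matrix (Fin m) (Fin k) ℝ) (a : Fin m) (b : Fin n) :
    (W * updEntry A i j x) a b = (W * A) a b + if b = j then W a i * (x - A i j) else 0 := by
  by_cases hb : b = j
  · subst hb
    have hcol : ∀ l, updEntry A i b x l b = A l b + if l = i then x - A i b else 0 := by
      intro l; by_cases hl : l = i <;> simp [updEntry, hl]
    simp [Matrix.mul_apply, hcol, mul_add, Finset.sum_add_distrib]
  · simp [Matrix.mul_apply, updEntry, hb]

end updEntry

theorem frobSq_sub_mul_updEntry {m n k : ℕ} (V : Matrix (Fin m) (Fin n) ℝ)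
    (W : Matrix (Fin m) (Fin k) ℝ) (H : Matrix (Fin k) (Fin n) ℝ) (i : Fin k) (j : Fin n)
    (x : ℝ) :
    frobSq (V - W * updEntry H i j x) = frobSq (V - W * H)
      - 2 * (Wᵀ * (V - W * H)) i j * (x - H i j) + (Wᵀ * W) i i * (x - H i j) ^ 2 := by
  have hentry : ∀ a b, (V - W * updEntry H i j x) a b ^ 2 = (V - W * H) a b ^ 2
      + if b = j then -2 * (W a i * (V - W * H) a j) * (x - H i j)
        + W a i * W a i * (x - H i j) ^ 2 else 0 := by
    intro a b
    simp only [Matrix.sub_apply, mul_updEntry_apply]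
    split_ifs with hb
    · subst hb; ring
    · ring
  simp only [frobSq, hentry, Finset.sum_add_distrib, Finset.sum_ite_eq', Finset.mem_univ,
    if_true, Matrix.mul_apply, Matrix.transpose_apply, ← Finset.sum_mul, ← Finset.mul_sum]
  ring

theorem frobSq_updEntry_sub {k n : ℕ} (H Hideal : Matrix (Fin k) (Fin n) ℝ) (i : Fin k)
    (j : Fin n) (x : ℝ) :
    frobSq (updEntry H i j x - Hideal)
      = frobSq (H - Hideal) + ((x - Hideal i j) ^ 2 - (H i j - Hideal i j) ^ 2) := by
  have := frobSq_sub_sq_eq_of_eq_off (A := updEntry H i j x - Hideal) (B := H - Hideal) i j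
    fun a b hab => by simp [updEntry_apply_of_ne H i j x hab]
  simp only [Matrix.sub_apply, updEntry_apply_self] at this
  linarith

theorem frobSq_hadamard_updEntry_sub {k n : ℕ} (H : Matrix (Fin k) (Fin n) ℝ) (i : Fin k)
    (j : Fin n) (x : ℝ) :
    frobSq (updEntry H i j x ⊙ updEntry H i j x - updEntry H i j x)
      = frobSq (H ⊙ H - H) + ((x * x - x) ^ 2 - (H i j * H i j - H i j) ^ 2) := by
  have := frobSq_sub_sq_eq_of_eq_off (A := updEntry H i j x ⊙ updEntry H i j x - updEntry H i j x)
    (B := H ⊙ H - H) i j fun a b hab => by simp [updEntry_apply_of_ne H i j x hab]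
  simp only [Matrix.sub_apply, Matrix.hadamard_apply, updEntry_apply_self] at this
  linarith

theorem fObj_updEntry {m n k : ℕ} (V : Matrix (Fin m) (Fin n) ℝ)
    (Hideal : Matrix (Fin k) (Fin n) ℝ) (lam0 lam1 lam2 : ℝ) (W : Matrix (Fin m) (Fin k) ℝ)
    (H : Matrix (Fin k) (Fin n) ℝ) (i : Fin k) (j : Fin n) (x : ℝ) :
    fObj V Hideal lam0 lam1 lam2 W (updEntry H i j x) = fObj V Hideal lam0 lam1 lam2 W H
      - 2 * (Wᵀ * (V - W * H)) i j * (x - H i j) + (Wᵀ * W) i i * (x - H i j) ^ 2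
      + lam1 * ((x - Hideal i j) ^ 2 - (H i j - Hideal i j) ^ 2)
      + lam2 * ((x * x - x) ^ 2 - (H i j * H i j - H i j) ^ 2) := by
  simp only [fObj, frobSq_sub_mul_updEntry, frobSq_updEntry_sub, frobSq_hadamard_updEntry_sub]
  ring

section entrywise

variable {l m n : ℕ} {A : Matrix (Fin l) (Fin m) ℝ} {B : Matrix (Fin m) (Fin n) ℝ}

theorem mul_apply_nonneg (hA : ∀ a c, 0 ≤ A a c) (hB : ∀ c b, 0 ≤ B c b) (a : Fin l)
    (b : Fin n) : 0 ≤ (A * B) a b := by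
  rw [Matrix.mul_apply]
  exact Finset.sum_nonneg fun c _ => mul_nonneg (hA a c) (hB c b)

theorem mul_le_mul_apply_of_nonneg (hA : ∀ a c, 0 ≤ A a c) (hB : ∀ c b, 0 ≤ B c b) (a : Fin l)
    (c : Fin m) (b : Fin n) : A a c * B c b ≤ (A * B) a b :=
  Finset.single_le_sum (f := fun c => A a c * B c b)
    (fun c _ => mul_nonneg (hA a c) (hB c b)) (Finset.mem_univ c)

end entrywise

section derivatives

variable {m n k : ℕ} (V : Matrix (Fin m) (Fin n) ℝ) (Hideal : Matrix (Fin k) (Fin n) ℝ)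
  (lam0 lam1 lam2 : ℝ) (W : Matrix (Fin m) (Fin k) ℝ) (H : Matrix (Fin k) (Fin n) ℝ)
  (i : Fin k) (j : Fin n)

theorem deriv_fObj_updEntry :
    deriv (fun x => fObj V Hideal lam0 lam1 lam2 W (updEntry H i j x)) = fun x =>
      -2 * (Wᵀ * (V - W * H)) i j + 2 * (Wᵀ * W) i i * (x - H i j)
        + 2 * lam1 * (x - Hideal i j) + lam2 * (2 * (x * x - x) * (2 * x - 1)) := by
  funext x
  simp only [fObj_updEntry]
  have hx := hasDerivAt_id' x
  have h1 := (hx.sub_const (H i j)).const_mul (2 * (Wᵀ * (V - W * H)) i j)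
  have h2 := ((hx.sub_const (H i j)).pow 2).const_mul ((Wᵀ * W) i i)
  have h3 := (((hx.sub_const (Hideal i j)).pow 2).sub_const
    ((H i j - Hideal i j) ^ 2)).const_mul lam1
  have h4 := ((((hx.mul hx).sub hx).pow 2).sub_const ((H i j * H i j - H i j) ^ 2)).const_mul lam2
  refine ((((h1.const_sub (fObj V Hideal lam0 lam1 lam2 W H)).add h2).add h3).add h4).deriv.trans ?_
  simp only [Pi.mul_apply, Pi.sub_apply]
  push_cast
  ring

theorem deriv_deriv_fObj_updEntry (x : ℝ) :
    deriv (deriv fun x => fObj V Hideal lam0 lam1 lam2 W (updEntry H i j x)) x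
      = 2 * (Wᵀ * W) i i + 2 * lam1 + lam2 * (12 * x ^ 2 - 12 * x + 2) := by
  rw [deriv_fObj_updEntry]
  have hx := hasDerivAt_id' x
  have h1 := (hx.sub_const (H i j)).const_mul (2 * (Wᵀ * W) i i)
  have h2 := (hx.sub_const (Hideal i j)).const_mul (2 * lam1)
  have h3 := ((((hx.mul hx).sub hx).const_mul 2).mul ((hx.const_mul 2).sub_const 1)).const_mul lam2
  refine (((h1.const_add (-2 * (Wᵀ * (V - W * H)) i j)).add h2).add h3).deriv.trans ?_
  simp only [Pi.mul_apply, Pi.sub_apply]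
  ring

end derivatives

theorem G_dominates_taylor_polynomial_general
    {m n k : ℕ}
    (V : Matrix (Fin m) (Fin n) ℝ) (W : Matrix (Fin m) (Fin k) ℝ)
    (H Hideal : Matrix (Fin k) (Fin n) ℝ)
    (hW : ∀ i j, 0 ≤ W i j) (hH : ∀ i j, 0 ≤ H i j)
    (lam0 lam1 lam2 : ℝ) (hlam2 : 0 ≤ lam2)
    (i : Fin k) (j : Fin n) (hpos : 0 < H i j) :
    let ht : ℝ := H i j
    let Fij : ℝ → ℝ := fun h => fObj V Hideal lam0 lam1 lam2 W (updEntry H i j h)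
    let phi : ℝ := ((Wᵀ * W * H) i j + lam1 * ht + 6 * lam2 * ht ^ 3 + lam2 * ht) / ht
    let G : ℝ → ℝ := fun h => Fij ht + deriv Fij ht * (h - ht) + phi * (h - ht) ^ 2
    (∀ h : ℝ, G h ≥ Fij ht + deriv Fij ht * (h - ht)
        + (1 / 2) * deriv (deriv Fij) ht * (h - ht) ^ 2) ∧
    G ht = Fij ht := by
  intro ht Fij phi G
  have hWtW : ∀ a c, 0 ≤ (Wᵀ * W) a c := mul_apply_nonneg (fun a c => hW c a) hW
  have hdiag : (Wᵀ * W) i i * ht ≤ (Wᵀ * W * H) i j := mul_le_mul_apply_of_nonneg hWtW hH i i j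
  have hcurv : (1 / 2) * deriv (deriv Fij) ht ≤ phi := by
    rw [deriv_deriv_fObj_updEntry, le_div_iff₀ hpos]
    nlinarith [mul_nonneg hlam2 (sq_nonneg ht)]
  refine ⟨fun h => ?_, by simp [G]⟩
  linarith [mul_le_mul_of_nonneg_right hcurv (sq_nonneg (h - ht))]

/-- With `h^t = H_{ij} > 0` and
`φ_{ij} = ((WᵀWH)_{ij} + λ1 h^t + 6λ2 (h^t)³ + λ2 h^t)/h^t`, the function
`G(h, h^t) = F_{ij}(h^t) + F_{ij}′(h^t)(h − h^t) + φ_{ij}(h − h^t)²` dominates the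
second-order Taylor polynomial of `F_{ij}` at `h^t`, and `G(h^t, h^t) = F_{ij}(h^t)`. -/
theorem G_dominates_taylor_polynomial
    {m n k : ℕ}
    (V : Matrix (Fin m) (Fin n) ℝ) (W : Matrix (Fin m) (Fin k) ℝ)
    (H Hideal : Matrix (Fin k) (Fin n) ℝ)
    (hW : ∀ i j, 0 ≤ W i j) (hH : ∀ i j, 0 ≤ H i j)
    (lam0 lam1 lam2 : ℝ) (hlam1 : 0 ≤ lam1) (hlam2 : 0 ≤ lam2)
    (i : Fin k) (j : Fin n) (hpos : 0 < H i j) :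
    let ht : ℝ := H i j
    let Fij : ℝ → ℝ := fun h => fObj V Hideal lam0 lam1 lam2 W (updEntry H i j h)
    let phi : ℝ := ((Wᵀ * W * H) i j + lam1 * ht + 6 * lam2 * ht ^ 3 + lam2 * ht) / ht
    let G : ℝ → ℝ := fun h => Fij ht + deriv Fij ht * (h - ht) + phi * (h - ht) ^ 2
    (∀ h : ℝ, G h ≥ Fij ht + deriv Fij ht * (h - ht)
        + (1 / 2) * deriv (deriv Fij) ht * (h - ht) ^ 2) ∧
    G ht = Fij ht :=
  G_dominates_taylor_polynomial_general V W H Hideal hW hH lam0 lam1 lam2 hlam2 i j hpos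
end

section
/- Let V ∈ ℝ^{m×n}, W ∈ ℝ^{m×k}, H, H_ideal ∈ ℝ^{k×n} be real matrices, λ1, λ2 real parameters, fix indices i, j with h = H_{ij} > 0, and let F_{ij} : ℝ → ℝ be the NMF-Guttman objective f(W,H) viewed as a function of the single entry H_{ij}. Set φ_{ij} = ((WᵀWH)_{ij} + λ1 h + 6λ2 h³ + λ2 h)/h and suppose φ_{ij} > 0. Then the quadratic G(·, h) = F_{ij}(h) + F_{ij}′(h)(· − h) + φ_{ij}(· − h)² has unique minimiser h − F_{ij}′(h)/(2φ_{ij}), and this minimiser equals the multiplicative update h · ((WᵀV)_{ij} + 4λ2 h³ + 3λ2 h² + λ1 (H_ideal)_{ij}) / ((WᵀWH)_{ij} + 6λ2 h³ + (λ1+λ2) h). -/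
/-! Since `φ > 0`, completing the square writes `G(x, h) = G(h*, h) + φ (x - h*)²` with
`h* = h - F′(h) / (2φ)`, which gives existence and uniqueness of the minimiser. Differentiating the
three `H`-dependent Frobenius terms entrywise along `t ↦ H + (t - h) E_{ij}` gives
`F′(h) = 2 ((WᵀWH)_{ij} - (WᵀV)_{ij}) + 2λ₁ (h - (H_ideal)_{ij}) + 2λ₂ (h² - h)(2h - 1)`.
With `E = φ h` this is `2 (E - N)`, `N` the numerator of the multiplicative update, so
`h* = h - h (E - N) / E = h N / E`. -/

open Matrix BigOperators

section Quadratic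

variable {a b c x₀ : ℝ}

lemma quadratic_eq_vertex_add_sq (ha : a ≠ 0) (x : ℝ) :
    c + b * (x - x₀) + a * (x - x₀) ^ 2
      = (c + b * (x₀ - b / (2 * a) - x₀) + a * (x₀ - b / (2 * a) - x₀) ^ 2)
        + a * (x - (x₀ - b / (2 * a))) ^ 2 := by
  field_simp
  ring

lemma quadratic_vertex_le (ha : 0 < a) (x : ℝ) :
    c + b * (x₀ - b / (2 * a) - x₀) + a * (x₀ - b / (2 * a) - x₀) ^ 2
      ≤ c + b * (x - x₀) + a * (x - x₀) ^ 2 := by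
  rw [quadratic_eq_vertex_add_sq ha.ne' x]
  nlinarith [sq_nonneg (x - (x₀ - b / (2 * a)))]

lemma eq_quadratic_vertex_of_forall_le (ha : 0 < a) {x : ℝ}
    (hx : ∀ y, c + b * (x - x₀) + a * (x - x₀) ^ 2 ≤ c + b * (y - x₀) + a * (y - x₀) ^ 2) :
    x = x₀ - b / (2 * a) := by
  have h := hx (x₀ - b / (2 * a))
  rw [quadratic_eq_vertex_add_sq ha.ne' x] at h
  have hsq : (x - (x₀ - b / (2 * a))) ^ 2 = 0 :=
    le_antisymm (nonpos_of_mul_nonpos_right (by linarith) ha) (sq_nonneg _)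
  exact sub_eq_zero.mp (pow_eq_zero_iff two_ne_zero |>.mp hsq)

end Quadratic

section Derivative

variable {m n k : ℕ} {x : ℝ}

lemma hasDerivAt_frobSq {A : ℝ → Matrix (Fin m) (Fin n) ℝ} {A' : Matrix (Fin m) (Fin n) ℝ}
    (hA : ∀ a b, HasDerivAt (fun t => A t a b) (A' a b) x) :
    HasDerivAt (fun t => frobSq (A t)) (2 * ∑ a, ∑ b, A x a b * A' a b) x := by
  simp only [frobSq, Finset.mul_sum]
  refine HasDerivAt.fun_sum fun a _ => HasDerivAt.fun_sum fun b _ => ?_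
  exact ((hA a b).fun_pow 2).congr_deriv (by norm_num; ring)

lemma hasDerivAt_updEntry_apply (A : Matrix (Fin k) (Fin n) ℝ) (i : Fin k) (j : Fin n)
    (a : Fin k) (b : Fin n) :
    HasDerivAt (fun t => updEntry A i j t a b) (single i j (1 : ℝ) a b) x := by
  by_cases hab : a = i ∧ b = j
  · obtain ⟨rfl, rfl⟩ := hab
    simpa [updEntry] using hasDerivAt_id' x
  · have hab' : ¬(i = a ∧ j = b) := fun h => hab ⟨h.1.symm, h.2.symm⟩
    simpa only [updEntry, if_neg hab, single_apply, if_neg hab'] using hasDerivAt_const x (A a b)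

lemma updEntry_self (A : Matrix (Fin k) (Fin n) ℝ) (i : Fin k) (j : Fin n) :
    updEntry A i j (A i j) = A := by
  ext a b
  by_cases hab : a = i ∧ b = j
  · obtain ⟨rfl, rfl⟩ := hab
    simp [updEntry]
  · simp [updEntry, hab]

lemma sum_mul_single (A : Matrix (Fin k) (Fin n) ℝ) (i : Fin k) (j : Fin n) (c : ℝ) :
    ∑ a, ∑ b, A a b * single i j c a b = A i j * c := by
  simp [single_apply, ite_and, Finset.sum_ite_eq]

lemma sum_mul_mul_single (A : Matrix (Fin m) (Fin n) ℝ) (W : Matrix (Fin m) (Fin k) ℝ)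
    (i : Fin k) (j : Fin n) (c : ℝ) :
    ∑ a, ∑ b, A a b * (W * single i j c) a b = (Wᵀ * A) i j * c := by
  simp [mul_apply, single_apply, ite_and, Finset.mul_sum, mul_comm, mul_left_comm]

lemma hasDerivAt_fObj_updEntry (V : Matrix (Fin m) (Fin n) ℝ)
    (W : Matrix (Fin m) (Fin k) ℝ) (H Hideal : Matrix (Fin k) (Fin n) ℝ) (lam0 lam1 lam2 : ℝ)
    (i : Fin k) (j : Fin n) :
    HasDerivAt (fun t => fObj V Hideal lam0 lam1 lam2 W (updEntry H i j t))
      (2 * ((Wᵀ * W * H) i j - (Wᵀ * V) i j) + 2 * lam1 * (H i j - Hideal i j)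
        + 2 * lam2 * (H i j ^ 2 - H i j) * (2 * H i j - 1)) (H i j) := by
  set U := updEntry H i j
  have hU : ∀ a b, HasDerivAt (fun t => U t a b) (single i j (1 : ℝ) a b) (H i j) :=
    hasDerivAt_updEntry_apply H i j
  have hUH : U (H i j) = H := updEntry_self H i j
  have hres := hasDerivAt_frobSq (x := H i j) (A := fun t => V - W * U t)
    (A' := -(W * single i j (1 : ℝ))) fun a b => by
      simpa only [Matrix.sub_apply, mul_apply, Matrix.neg_apply] using
        (HasDerivAt.fun_sum fun c _ => (hU c b).const_mul (W a c)).const_sub (V a b)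
  have hfit := hasDerivAt_frobSq (x := H i j) (A := fun t => U t - Hideal)
    (A' := single i j (1 : ℝ)) fun a b => by
      simpa only [Matrix.sub_apply] using (hU a b).sub_const (Hideal a b)
  have hbin := hasDerivAt_frobSq (x := H i j) (A := fun t => U t ⊙ U t - U t)
    (A' := single i j (2 * H i j - 1)) fun a b => by
      simp only [Matrix.sub_apply, hadamard_apply]
      refine (((hU a b).fun_mul (hU a b)).fun_sub (hU a b)).congr_deriv ?_
      rw [hUH]
      by_cases hab : i = a ∧ j = b
      · obtain ⟨rfl, rfl⟩ := hab
        simp only [single_apply_same]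
        ring
      · simp only [single_apply, if_neg hab]
        ring
  refine (((hres.add_const (lam0 * frobSq W)).add (hfit.const_mul lam1)).add
    (hbin.const_mul lam2)).congr_deriv ?_
  simp only [hUH, Matrix.neg_apply, mul_neg, Finset.sum_neg_distrib]
  rw [sum_mul_mul_single, sum_mul_single, sum_mul_single, Matrix.mul_sub, Matrix.mul_assoc]
  simp only [Matrix.sub_apply, hadamard_apply]
  ring

end Derivative

lemma sub_div_two_mul_div_eq_mul_div {h E N D : ℝ} (hh : h ≠ 0) (hE : E ≠ 0)
    (hD : D = 2 * (E - N)) : h - D / (2 * (E / h)) = h * N / E := by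
  subst hD
  field_simp
  ring

/-- With `h = H_{ij} > 0` and `φ_{ij} > 0`, the quadratic
`G(·, h) = F_{ij}(h) + F_{ij}′(h)(· − h) + φ_{ij}(· − h)²` has unique minimiser
`h − F_{ij}′(h)/(2φ_{ij})`, and this minimiser equals the multiplicative update
`h ((WᵀV)_{ij} + 4λ2 h³ + 3λ2 h² + λ1 (H_ideal)_{ij}) / ((WᵀWH)_{ij} + 6λ2 h³ + (λ1+λ2) h)`. -/
theorem quadratic_minimiser_is_multiplicative_update
    {m n k : ℕ}
    (V : Matrix (Fin m) (Fin n) ℝ) (W : Matrix (Fin m) (Fin k) ℝ)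
    (H Hideal : Matrix (Fin k) (Fin n) ℝ)
    (lam0 lam1 lam2 : ℝ) (i : Fin k) (j : Fin n) (hpos : 0 < H i j) :
    let ht : ℝ := H i j
    let Fij : ℝ → ℝ := fun h => fObj V Hideal lam0 lam1 lam2 W (updEntry H i j h)
    let phi : ℝ := ((Wᵀ * W * H) i j + lam1 * ht + 6 * lam2 * ht ^ 3 + lam2 * ht) / ht
    let G : ℝ → ℝ := fun h => Fij ht + deriv Fij ht * (h - ht) + phi * (h - ht) ^ 2
    let hstar : ℝ := ht - deriv Fij ht / (2 * phi)
    0 < phi →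
      (∀ h : ℝ, G hstar ≤ G h) ∧
      (∀ h : ℝ, (∀ h' : ℝ, G h ≤ G h') → h = hstar) ∧
      hstar = ht * ((Wᵀ * V) i j + 4 * lam2 * ht ^ 3 + 3 * lam2 * ht ^ 2
          + lam1 * Hideal i j)
        / ((Wᵀ * W * H) i j + 6 * lam2 * ht ^ 3 + (lam1 + lam2) * ht) := by
  intro ht Fij phi G hstar hphi
  refine ⟨quadratic_vertex_le hphi, fun h => eq_quadratic_vertex_of_forall_le hphi, ?_⟩
  rw [show (Wᵀ * W * H) i j + 6 * lam2 * ht ^ 3 + (lam1 + lam2) * ht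
      = (Wᵀ * W * H) i j + lam1 * ht + 6 * lam2 * ht ^ 3 + lam2 * ht by ring]
  exact sub_div_two_mul_div_eq_mul_div hpos.ne' (div_ne_zero_iff.mp hphi.ne').1
    (by rw [(hasDerivAt_fObj_updEntry V W H Hideal lam0 lam1 lam2 i j).deriv]; ring)
end

section
/- Let V ∈ ℝ^{m×n}, W ∈ ℝ^{m×k}, H, H_ideal ∈ ℝ^{k×n} be real matrices and λ0, λ1, λ2 real parameters, and define f(W,H) = ‖V − WH‖_F² + λ0‖W‖_F² + λ1‖H − H_ideal‖_F² + λ2‖H∘H − H‖_F². Then, for fixed W, the partial derivative of f with respect to the entry h_{ij} of H equals 2(WᵀWH − WᵀV + (λ1+λ2)H − λ1 H_ideal)_{ij} + 4λ2 h_{ij}³ − 6λ2 h_{ij}². -/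
/-! Each term of `f` is a squared Frobenius norm `‖A(t)‖²`, whose derivative is `2⟨A, A'⟩_F`.
Moving `h_{ij}` moves `H` along the matrix unit `E = single i j 1`, so the three curves
`V - WH`, `H - H_ideal`, `H∘H - H` have velocities `-WE`, `E` and `(2h_{ij} - 1)E`. Pairing with a
matrix unit reads off an entry: `⟨V - WH, -WE⟩_F = -(Wᵀ(V - WH))_{ij}`, `⟨H - H_ideal, E⟩_F =
(H - H_ideal)_{ij}`, and the Guttman term contributes `2λ₂(h² - h)(2h - 1) = λ₂(4h³ - 6h² + 2h)`. -/

open Matrix BigOperators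

section EntrywiseDeriv

variable {𝕜 : Type*} [NontriviallyNormedField 𝕜] {ι κ : Type*}

/-- Matrices carry no global norm, so derivatives of matrix-valued curves are taken entrywise. -/
def HasEntrywiseDerivAt (A : 𝕜 → Matrix ι κ 𝕜) (A' : Matrix ι κ 𝕜) (x : 𝕜) : Prop :=
  ∀ a b, HasDerivAt (fun t => A t a b) (A' a b) x

namespace HasEntrywiseDerivAt

variable {A B : 𝕜 → Matrix ι κ 𝕜} {A' B' : Matrix ι κ 𝕜} {x : 𝕜}

theorem const (M : Matrix ι κ 𝕜) (x : 𝕜) : HasEntrywiseDerivAt (fun _ => M) 0 x :=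
  fun _ _ => hasDerivAt_const x _

theorem sub (hA : HasEntrywiseDerivAt A A' x) (hB : HasEntrywiseDerivAt B B' x) :
    HasEntrywiseDerivAt (fun t => A t - B t) (A' - B') x :=
  fun a b => (hA a b).sub (hB a b)

theorem hadamard (hA : HasEntrywiseDerivAt A A' x) (hB : HasEntrywiseDerivAt B B' x) :
    HasEntrywiseDerivAt (fun t => A t ⊙ B t) (A' ⊙ B x + A x ⊙ B') x :=
  fun a b => (hA a b).mul (hB a b)

theorem const_mul {μ : Type*} [Fintype ι] (W : Matrix μ ι 𝕜)
    (hA : HasEntrywiseDerivAt A A' x) : HasEntrywiseDerivAt (fun t => W * A t) (W * A') x := by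
  intro a b
  simp only [mul_apply]
  exact HasDerivAt.fun_sum fun r _ => (hA r b).const_mul (W a r)

end HasEntrywiseDerivAt

end EntrywiseDeriv

theorem HasEntrywiseDerivAt.frobSq {m n : ℕ} {A : ℝ → Matrix (Fin m) (Fin n) ℝ}
    {A' : Matrix (Fin m) (Fin n) ℝ} {x : ℝ} (hA : HasEntrywiseDerivAt A A' x) :
    HasDerivAt (fun t => frobSq (A t)) (2 * ∑ a, ∑ b, A x a b * A' a b) x := by
  simp only [Finset.mul_sum]
  refine HasDerivAt.fun_sum fun a _ => HasDerivAt.fun_sum fun b _ => ?_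
  simpa [mul_assoc] using (hA a b).fun_pow 2

section UpdEntry

variable {k n : ℕ} (H : Matrix (Fin k) (Fin n) ℝ) (i : Fin k) (j : Fin n)

theorem hasEntrywiseDerivAt_updEntry (x : ℝ) :
    HasEntrywiseDerivAt (updEntry H i j) (single i j 1) x := by
  intro a b
  by_cases hab : a = i ∧ b = j
  · obtain ⟨rfl, rfl⟩ := hab
    simpa [updEntry] using hasDerivAt_id' x
  · have hab' : ¬(i = a ∧ j = b) := fun h => hab ⟨h.1.symm, h.2.symm⟩
    simpa [updEntry, hab, hab'] using hasDerivAt_const x (H a b)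

theorem updEntry_self_s9 : updEntry H i j (H i j) = H := by
  ext a b
  by_cases hab : a = i ∧ b = j
  · obtain ⟨rfl, rfl⟩ := hab
    simp [updEntry]
  · simp [updEntry, hab]

end UpdEntry

namespace Matrix

variable {α ι κ : Type*} [DecidableEq ι] [DecidableEq κ]

theorem single_sub [AddCommGroup α] (i : ι) (j : κ) (a b : α) :
    single i j (a - b) = single i j a - single i j b :=
  map_sub (singleAddMonoidHom i j) a b

theorem single_hadamard [MulZeroClass α] (M : Matrix ι κ α) (i : ι) (j : κ) (c : α) :
    single i j c ⊙ M = single i j (c * M i j) := by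
  ext a b
  by_cases hab : i = a ∧ j = b
  · obtain ⟨rfl, rfl⟩ := hab
    simp
  · simp [hab]

variable [Fintype ι] [Fintype κ]

theorem sum_sum_mul_single [NonUnitalNonAssocSemiring α] (M : Matrix ι κ α) (i : ι) (j : κ)
    (c : α) : ∑ a, ∑ b, M a b * single i j c a b = M i j * c := by
  simp [single_apply, ite_and]

theorem sum_sum_mul_mul_single [CommSemiring α] {μ : Type*} [Fintype μ] (M : Matrix μ κ α)
    (W : Matrix μ ι α) (i : ι) (j : κ) (c : α) :
    ∑ a, ∑ b, M a b * (W * single i j c) a b = (Wᵀ * M) i j * c := by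
  simp [mul_apply, single_apply, ite_and, Finset.mul_sum, mul_comm, mul_left_comm]

end Matrix

/-- For fixed `W`, the partial derivative of the NMF-Guttman objective `f` with
respect to the entry `h_{ij}` of `H` equals
`2(WᵀWH − WᵀV + (λ1+λ2)H − λ1 H_ideal)_{ij} + 4λ2 h_{ij}³ − 6λ2 h_{ij}²`. -/
theorem partial_derivative_wrt_H_entry
    {m n k : ℕ}
    (V : Matrix (Fin m) (Fin n) ℝ) (W : Matrix (Fin m) (Fin k) ℝ)
    (H Hideal : Matrix (Fin k) (Fin n) ℝ)
    (lam0 lam1 lam2 : ℝ) (i : Fin k) (j : Fin n) :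
    HasDerivAt (fun h : ℝ => fObj V Hideal lam0 lam1 lam2 W (updEntry H i j h))
      (2 * ((Wᵀ * W * H) i j - (Wᵀ * V) i j + (lam1 + lam2) * H i j
          - lam1 * Hideal i j)
        + 4 * lam2 * (H i j) ^ 3 - 6 * lam2 * (H i j) ^ 2)
      (H i j) := by
  have hU := hasEntrywiseDerivAt_updEntry H i j (H i j)
  have hFit := ((HasEntrywiseDerivAt.const V _).sub (hU.const_mul W)).frobSq
  have hIdeal := (hU.sub (HasEntrywiseDerivAt.const Hideal _)).frobSq
  have hBinary := ((hU.hadamard hU).sub hU).frobSq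
  refine (((hFit.add_const (lam0 * frobSq W)).add (hIdeal.const_mul lam1)).add
    (hBinary.const_mul lam2)).congr_deriv ?_
  simp only [updEntry_self_s9, zero_sub, sub_zero, hadamard_comm H, single_hadamard, one_mul,
    ← single_add, ← single_sub]
  simp only [Matrix.neg_apply, mul_neg, Finset.sum_neg_distrib, sum_sum_mul_single,
    sum_sum_mul_mul_single]
  simp only [Matrix.sub_apply, hadamard_apply, Matrix.mul_sub, Matrix.mul_assoc]
  ring
end
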